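/- arXiv:1906.04339 — 3 statements merged into one kernel-verified Lean document; each statement's English description precedes it below -/
import Mathlib

section
/- For every integer n ≥ 3, the characteristic polynomial of the Laplacian matrix of G_n over ℝ factors as char(L(G_n)) = (X − 6)^n · ∏_{i=0}^{n−1} (X − 8·sin²(iπ/n)). In particular the Laplacian eigenvalues of G_n are 0, 8·sin²(iπ/n) for i = 1, …, n−1, and 6 with multiplicity n. -/
open Polynomial

/-- The graph `G_n = P₂ ⊠ C_n`: vertex set `(ZMod n) × Fin 2`, where two distinct vertices
`(i,a)` and `(j,b)` are adjacent iff `i = j` or `i = j + 1` or `j = i + 1` in `ZMod n`. -/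
def Gn (n : ℕ) : SimpleGraph (ZMod n × Fin 2) where
  Adj x y := x ≠ y ∧ (x.1 = y.1 ∨ x.1 = y.1 + 1 ∨ y.1 = x.1 + 1)
  symm := by
    constructor
    rintro x y ⟨hne, h | h | h⟩
    · exact ⟨hne.symm, Or.inl h.symm⟩
    · exact ⟨hne.symm, Or.inr (Or.inr h)⟩
    · exact ⟨hne.symm, Or.inr (Or.inl h)⟩
  loopless := by constructor; rintro x ⟨hne, -⟩; exact hne rfl

instance (n : ℕ) : DecidableRel (Gn n).Adj :=
  fun _ _ => inferInstanceAs (Decidable (_ ∧ _))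

/-!
`G_n` is 5-regular with adjacency matrix `C ⊗ J - 1`, where `C = 1 + A(C_n)` is the circulant
matrix of the closed neighbourhood of `0` in the cycle and `J` is the all-ones `2 × 2` matrix, so
`L(G_n) = 6 - C ⊗ J`. Over `ℂ` the characters `ψ(k ·)` of `ZMod n` are eigenvectors of `C` with
eigenvalues `1 + 2 cos (2πk/n)`, and `(1, 1)`, `(1, -1)` are eigenvectors of `J` with eigenvalues
`2`, `0`. Hence the Kronecker product of the Fourier matrix with the Hadamard matrix diagonalises
`L(G_n)`, with eigenvalues `6 - 2 (1 + 2 cos (2πk/n)) = 8 sin² (πk/n)` and `6`; the characteristic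
polynomial over `ℝ` is recovered since it commutes with `ℝ → ℂ`.
-/

open Matrix
open scoped Kronecker

namespace Matrix

theorem charpoly_eq_prod_of_mul_eq_mul_diagonal {n R : Type*} [Fintype n] [DecidableEq n]
    [CommRing R] {M V : Matrix n n R} {d : n → R}
    (hV : IsUnit V.det) (h : M * V = V * diagonal d) : M.charpoly = ∏ i, (X - C (d i)) := by
  have hM : M = V * (diagonal d * V⁻¹) := by
    rw [← mul_assoc, ← h, mul_assoc, mul_nonsing_inv _ hV, mul_one]
  rw [hM, charpoly_mul_comm, mul_assoc, nonsing_inv_mul _ hV, mul_one, charpoly_diagonal]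

theorem of_const_one_mul_hadamard {R : Type*} [Ring R] :
    (of fun _ _ => 1 : Matrix (Fin 2) (Fin 2) R) * !![1, 1; 1, -1] =
      !![1, 1; 1, -1] * diagonal ![2, 0] := by
  ext a b
  fin_cases a <;> fin_cases b <;> simp [mul_apply, Fin.sum_univ_two] <;> norm_num

end Matrix

theorem SimpleGraph.lapMatrix_map {V : Type*} [Fintype V] [DecidableEq V] (G : SimpleGraph V)
    [DecidableRel G.Adj] {R S : Type*} [Ring R] [Ring S] (f : R →+* S) :
    (G.lapMatrix R).map f = G.lapMatrix S := by
  ext v w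
  by_cases h : v = w
  · subst h
    simp [lapMatrix, degMatrix]
  · simp [lapMatrix, degMatrix, adjMatrix_apply, h, apply_ite f]

namespace ZMod

theorem prod_range_natCast {M : Type*} [CommMonoid M] (n : ℕ) [NeZero n] (f : ZMod n → M) :
    ∏ i ∈ Finset.range n, f i = ∏ k, f k :=
  Finset.prod_nbij' Nat.cast val (by simp) (by simp [val_lt])
    (fun _ hi => val_cast_of_lt (Finset.mem_range.mp hi)) (fun k _ => natCast_zmod_val k)
    (fun _ _ => rfl)

open Complex in
theorem stdAddChar_natCast_add_stdAddChar_neg (n : ℕ) [NeZero n] (i : ℕ) :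
    stdAddChar (i : ZMod n) + stdAddChar (-(i : ZMod n)) = 2 * cos (2 * Real.pi * i / n) := by
  rw [two_cos, ← Int.cast_natCast, ← Int.cast_neg, stdAddChar_coe, stdAddChar_coe]
  push_cast
  ring_nf

end ZMod

section Fourier

variable {A R : Type*} [CommRing A] [Fintype A] [DecidableEq A]

def fourierMatrix [CommRing R] (ψ : AddChar A R) : Matrix A A R := of fun i k => ψ (i * k)

theorem circulant_mul_fourierMatrix [CommRing R] (ψ : AddChar A R) (v : A → R) :
    circulant v * fourierMatrix ψ =
      fourierMatrix ψ * diagonal fun k => ∑ g, v g * ψ (-(g * k)) := by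
  ext i k
  rw [mul_apply, mul_diagonal, Finset.mul_sum]
  refine Fintype.sum_equiv (Equiv.subLeft i) _ _ fun j => ?_
  simp only [circulant_apply, fourierMatrix, of_apply, Equiv.subLeft_apply]
  rw [mul_left_comm, ← AddChar.map_add_eq_mul]
  congr 2
  ring

theorem fourierMatrix_mul_fourierMatrix_inv [Field R] {ψ : AddChar A R} (hψ : ψ.IsPrimitive) :
    fourierMatrix ψ * fourierMatrix ψ⁻¹ = (Fintype.card A : R) • 1 := by
  ext i j
  have h k : i * k + -(k * j) = k * (i - j) := by ring
  simp only [mul_apply, fourierMatrix, of_apply, AddChar.inv_apply, ← AddChar.map_add_eq_mul, h,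
    AddChar.sum_mulShift _ hψ, sub_eq_zero]
  by_cases hij : i = j <;> simp [hij]

theorem isUnit_det_fourierMatrix [Field R] {ψ : AddChar A R} (hψ : ψ.IsPrimitive)
    (hA : (Fintype.card A : R) ≠ 0) : IsUnit (fourierMatrix ψ).det := by
  have h := congrArg det (fourierMatrix_mul_fourierMatrix_inv hψ)
  rw [det_mul, det_smul, det_one, mul_one] at h
  exact isUnit_of_mul_isUnit_left (h ▸ (pow_ne_zero _ hA).isUnit)

end Fourier

def cycleClosedNbhd (R : Type*) [Zero R] [One R] (n : ℕ) : ZMod n → R :=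
  fun g => if g = 0 ∨ g = 1 ∨ g = -1 then 1 else 0

section Gn

variable (R : Type*) [Ring R] (n : ℕ)

theorem adjMatrix_Gn :
    (Gn n).adjMatrix R = circulant (cycleClosedNbhd R n) ⊗ₖ of (fun _ _ => 1) - 1 := by
  ext ⟨i, a⟩ ⟨j, b⟩
  have hnbhd : i - j = 0 ∨ i - j = 1 ∨ i - j = -1 ↔ i = j ∨ i = j + 1 ∨ j = i + 1 := by
    refine or_congr sub_eq_zero (or_congr sub_eq_iff_eq_add' ?_)
    constructor <;> intro h <;> linear_combination -h
  by_cases h : (i, a) = (j, b)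
  · simp [h, cycleClosedNbhd]
  · rw [SimpleGraph.adjMatrix_apply]
    simp [Gn, h, cycleClosedNbhd, hnbhd, one_apply_ne h]

variable [NeZero n] (hn : 3 ≤ n)
include hn

theorem sum_cycleClosedNbhd_mul (f : ZMod n → R) :
    ∑ g, cycleClosedNbhd R n g * f g = f 0 + f 1 + f (-1) := by
  have hcast (m : ℕ) (hm : m < 3) (h0 : m ≠ 0) : (m : ZMod n) ≠ 0 := by
    rw [Ne, ZMod.natCast_eq_zero_iff]
    exact fun h => h0 (Nat.eq_zero_of_dvd_of_lt h (by omega))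
  have h10 : (1 : ZMod n) ≠ 0 := by exact_mod_cast hcast 1 (by norm_num) one_ne_zero
  have h1 : (1 : ZMod n) ≠ -1 := fun h =>
    hcast 2 (by norm_num) two_ne_zero (by push_cast; linear_combination h)
  have hsupp : Finset.univ.filter (fun g : ZMod n => g = 0 ∨ g = 1 ∨ g = -1) = {0, 1, -1} := by
    ext
    simp
  simp only [cycleClosedNbhd, ite_mul, one_mul, zero_mul, ← Finset.sum_filter]
  rw [hsupp, Finset.sum_insert (by simp [h10.symm, h10]), Finset.sum_pair h1, add_assoc]

theorem degree_Gn (v : ZMod n × Fin 2) : (Gn n).degree v = 5 := by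
  have hdeg := (Gn n).adjMatrix_mulVec_const_apply (α := ℤ) (a := 1) (v := v)
  rw [adjMatrix_Gn, sub_mulVec, one_mulVec] at hdeg
  have hrow : ∑ j, cycleClosedNbhd ℤ n (v.1 - j) = 3 := by
    rw [← Fintype.sum_equiv (Equiv.subLeft v.1) _ _ fun _ => rfl]
    simpa using sum_cycleClosedNbhd_mul ℤ n hn 1
  simp [mulVec, dotProduct, Fintype.sum_prod_type, circulant_apply, ← Finset.mul_sum, hrow] at hdeg
  omega

theorem lapMatrix_Gn :
    (Gn n).lapMatrix R = 6 - circulant (cycleClosedNbhd R n) ⊗ₖ of (fun _ _ => 1) := by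
  have hdeg : (Gn n).degMatrix R = 5 := by
    simp only [SimpleGraph.degMatrix, degree_Gn n hn, Nat.cast_ofNat, diagonal_ofNat]
  rw [SimpleGraph.lapMatrix, hdeg, adjMatrix_Gn, sub_sub_eq_add_sub]
  norm_num

end Gn

theorem lapMatrix_Gn_mul_eigenbasis {R : Type*} [CommRing R] (n : ℕ) [NeZero n] (hn : 3 ≤ n)
    (ψ : AddChar (ZMod n) R) :
    (Gn n).lapMatrix R * (fourierMatrix ψ ⊗ₖ !![1, 1; 1, -1]) =
      (fourierMatrix ψ ⊗ₖ !![1, 1; 1, -1]) *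
        diagonal fun p => 6 - (1 + ψ p.1 + ψ (-p.1)) * ![2, 0] p.2 := by
  rw [lapMatrix_Gn R n hn, sub_mul, ← mul_kronecker_mul, circulant_mul_fourierMatrix,
    of_const_one_mul_hadamard, mul_kronecker_mul, diagonal_kronecker_diagonal,
    (Commute.ofNat_left _ _).eq, ← mul_sub, ← diagonal_ofNat, diagonal_sub]
  congr 3 with p
  rw [sum_cycleClosedNbhd_mul R n hn]
  simp only [neg_mul, zero_mul, one_mul, neg_zero, neg_neg, AddChar.map_zero_eq_one]
  ring

/-- For every integer `n ≥ 3`, the characteristic polynomial of the Laplacian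
matrix of `G_n` over `ℝ` factors as
`char(L(G_n)) = (X − 6)^n · ∏_{i=0}^{n−1} (X − 8·sin²(iπ/n))`. -/
theorem charpoly_lapMatrix_Gn (n : ℕ) [NeZero n] (hn : 3 ≤ n) :
    ((Gn n).lapMatrix ℝ).charpoly =
      (X - C (6 : ℝ)) ^ n *
        ∏ i ∈ Finset.range n, (X - C (8 * Real.sin (i * Real.pi / n) ^ 2)) := by
  set ψ : AddChar (ZMod n) ℂ := ZMod.stdAddChar
  have hV : IsUnit (fourierMatrix ψ ⊗ₖ !![(1 : ℂ), 1; 1, -1]).det := by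
    rw [det_kronecker, det_fin_two_of]
    refine ((isUnit_det_fourierMatrix (ZMod.isPrimitive_stdAddChar n) ?_).pow _).mul
      (IsUnit.pow _ ?_) <;> norm_num [NeZero.ne n]
  have heigenvalue (i : ℕ) :
      6 - (1 + ψ i + ψ (-i)) * 2 = ((8 * Real.sin (i * Real.pi / n) ^ 2 : ℝ) : ℂ) := by
    have hx : (2 * Real.pi * i / n : ℂ) = 2 * (i * Real.pi / n) := by ring
    rw [add_assoc, ZMod.stdAddChar_natCast_add_stdAddChar_neg, hx, Complex.cos_two_mul_eq_one_sub]
    push_cast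
    ring
  apply map_injective Complex.ofRealHom Complex.ofReal_injective
  rw [← charpoly_map, SimpleGraph.lapMatrix_map,
    charpoly_eq_prod_of_mul_eq_mul_diagonal hV (lapMatrix_Gn_mul_eigenbasis n hn ψ),
    Fintype.prod_prod_type]
  simp only [Fin.prod_univ_two, cons_val_zero, cons_val_one, mul_zero, sub_zero,
    Finset.prod_mul_distrib, Finset.prod_const, Finset.card_univ, ZMod.card,
    ← ZMod.prod_range_natCast, heigenvalue, Polynomial.map_mul, Polynomial.map_pow,
    Polynomial.map_prod, Polynomial.map_sub, map_X, map_C, Complex.ofRealHom_eq_coe,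
    Complex.ofReal_ofNat]
  exact mul_comm _ _
end

section
/- For every odd integer n ≥ 3, the Wiener index of G_n equals (n³ + n)/2. -/
/-- The Wiener index of a finite graph: the sum of the graph distances over all unordered
pairs of vertices, i.e. half the sum of `d(u,v)` over all ordered pairs `(u,v)`. -/
noncomputable def wienerIndex {V : Type*} [Fintype V] (G : SimpleGraph V) : ℕ :=
  (∑ u : V, ∑ v : V, G.dist u v) / 2

/-!
Write `|t|` for the cyclic distance `t.valMinAbs.natAbs` on `ZMod n`. Along an edge of `G_n` the
first coordinate moves by `0` or `±1`, and from `(i, a)` one can step to `(i ± 1, b)` for any `b`,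
so `d((i,a),(j,b)) = max 1 |i - j|` for distinct vertices. Hence every row of the distance matrix
sums to `1 + 2 ∑_t |t|`, and for `n = 2m + 1` one has `∑_t |t| = m (m + 1)`, so
`W(G_n) = n (2m(m + 1) + 1) = (n³ + n)/2`.
-/

open SimpleGraph Finset

lemma Finset.sum_range_min_sub_odd (m : ℕ) :
    ∑ k ∈ range (2 * m + 1), min k (2 * m + 1 - k) = m * (m + 1) := by
  induction m with
  | zero => simp
  | succ m ih =>
    rw [show 2 * (m + 1) + 1 = 2 * m + 1 + 1 + 1 by ring, sum_range_succ, sum_range_succ']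
    have hshift : ∀ k ∈ range (2 * m + 1),
        min (k + 1) (2 * m + 1 + 1 + 1 - (k + 1)) = min k (2 * m + 1 - k) + 1 := by
      intro k hk
      rw [mem_range] at hk
      omega
    have hlast : min (2 * m + 1 + 1) (2 * m + 1 + 1 + 1 - (2 * m + 1 + 1)) = 1 := by omega
    rw [sum_congr rfl hshift, sum_add_distrib, ih, sum_const, card_range, smul_eq_mul, hlast,
      Nat.zero_min]
    ring

namespace ZMod

lemma sum_natAbs_valMinAbs_odd (m : ℕ) :
    ∑ t : ZMod (2 * m + 1), t.valMinAbs.natAbs = m * (m + 1) := by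
  simp_rw [valMinAbs_natAbs_eq_min]
  exact (Fin.sum_univ_eq_sum_range (fun k => min k (2 * m + 1 - k)) _).trans
    (sum_range_min_sub_odd m)

lemma natAbs_valMinAbs_one_le (n : ℕ) : (1 : ZMod n).valMinAbs.natAbs ≤ 1 := by
  rcases eq_zero_or_neZero n with rfl | _
  · exact le_rfl
  rw [valMinAbs_natAbs_eq_min, val_one_eq_one_mod]
  exact (min_le_left _ _).trans (Nat.mod_le _ _)

end ZMod

namespace Gn

variable {n : ℕ}

lemma natAbs_valMinAbs_sub_le_one_of_adj {x y : ZMod n × Fin 2} (h : (Gn n).Adj x y) :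
    (x.1 - y.1).valMinAbs.natAbs ≤ 1 := by
  obtain ⟨-, h | h | h⟩ := h
  · simp [h]
  · simpa [h] using ZMod.natAbs_valMinAbs_one_le n
  · simpa [h] using ZMod.natAbs_valMinAbs_one_le n

lemma natAbs_valMinAbs_sub_le_length {x y : ZMod n × Fin 2} (w : (Gn n).Walk x y) :
    (x.1 - y.1).valMinAbs.natAbs ≤ w.length := by
  induction w with
  | nil => simp
  | @cons u v z h p ih =>
    calc (u.1 - z.1).valMinAbs.natAbs
        = ((u.1 - v.1) + (v.1 - z.1)).valMinAbs.natAbs := by rw [sub_add_sub_cancel]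
      _ ≤ ((u.1 - v.1).valMinAbs + (v.1 - z.1).valMinAbs).natAbs :=
          ZMod.natAbs_valMinAbs_add_le _ _
      _ ≤ (u.1 - v.1).valMinAbs.natAbs + (v.1 - z.1).valMinAbs.natAbs := Int.natAbs_add_le _ _
      _ ≤ (p.cons h).length := by
          have := natAbs_valMinAbs_sub_le_one_of_adj h
          rw [Walk.length_cons]
          omega

lemma exists_walk_length_le_one {x y : ZMod n × Fin 2}
    (h : x.1 = y.1 ∨ x.1 = y.1 + 1 ∨ y.1 = x.1 + 1) : ∃ w : (Gn n).Walk x y, w.length ≤ 1 := by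
  by_cases hxy : x = y
  · subst hxy
    exact ⟨.nil, zero_le_one⟩
  · exact ⟨.cons ⟨hxy, h⟩ .nil, le_rfl⟩

lemma exists_walk_add_natCast (i : ZMod n) (a : Fin 2) (k : ℕ) :
    ∃ w : (Gn n).Walk (i, a) (i + k, a), w.length ≤ k := by
  induction k with
  | zero => exact ⟨Walk.nil.copy rfl (by simp), by simp⟩
  | succ k ih =>
    obtain ⟨w, hw⟩ := ih
    obtain ⟨s, hs⟩ := exists_walk_length_le_one (n := n) (x := (i + k, a)) (y := (i + ↑(k + 1), a))
      (Or.inr (Or.inr (by push_cast; ring)))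
    exact ⟨w.append s, by rw [Walk.length_append]; omega⟩

lemma exists_walk_add_natCast_max (i : ZMod n) (a b : Fin 2) (k : ℕ) :
    ∃ w : (Gn n).Walk (i, a) (i + k, b), w.length ≤ max 1 k := by
  cases k with
  | zero =>
    obtain ⟨w, hw⟩ := exists_walk_length_le_one (n := n) (x := (i, a)) (y := (i + ↑(0 : ℕ), b))
      (Or.inl (by simp))
    exact ⟨w, hw.trans (le_max_left _ _)⟩
  | succ k =>
    obtain ⟨w, hw⟩ := exists_walk_add_natCast i a k
    obtain ⟨s, hs⟩ := exists_walk_length_le_one (n := n) (x := (i + k, a)) (y := (i + ↑(k + 1), b))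
      (Or.inr (Or.inr (by push_cast; ring)))
    exact ⟨w.append s, by rw [Walk.length_append]; omega⟩

lemma exists_walk_length_le (x y : ZMod n × Fin 2) :
    ∃ w : (Gn n).Walk x y, w.length ≤ max 1 (x.1 - y.1).valMinAbs.natAbs := by
  rcases Int.natAbs_eq (x.1 - y.1).valMinAbs with h | h
  · have hx : y.1 + ((x.1 - y.1).valMinAbs.natAbs : ℕ) = x.1 := by
      rw [← Int.cast_natCast, ← h, ZMod.coe_valMinAbs, add_sub_cancel]
    obtain ⟨w, hw⟩ := exists_walk_add_natCast_max y.1 y.2 x.2 (x.1 - y.1).valMinAbs.natAbs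
    exact ⟨(w.copy rfl (by rw [hx])).reverse, by simpa using hw⟩
  · have hy : x.1 + ((x.1 - y.1).valMinAbs.natAbs : ℕ) = y.1 := by
      rw [← Int.cast_natCast, ← neg_eq_iff_eq_neg.mpr h, Int.cast_neg, ZMod.coe_valMinAbs,
        neg_sub, add_sub_cancel]
    obtain ⟨w, hw⟩ := exists_walk_add_natCast_max x.1 x.2 y.2 (x.1 - y.1).valMinAbs.natAbs
    exact ⟨w.copy rfl (by rw [hy]), by simpa using hw⟩

theorem dist_eq (x y : ZMod n × Fin 2) :
    (Gn n).dist x y = if x = y then 0 else max 1 (x.1 - y.1).valMinAbs.natAbs := by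
  split_ifs with hxy
  · rw [hxy, dist_self]
  obtain ⟨w, hw⟩ := exists_walk_length_le x y
  obtain ⟨p, hp⟩ := (Walk.reachable w).exists_walk_length_eq_dist
  have hpos := (Walk.reachable w).pos_dist_of_ne hxy
  have hlower := natAbs_valMinAbs_sub_le_length p
  have hupper := dist_le w
  omega

lemma sum_dist_fin_two (i j : ZMod n) (a : Fin 2) :
    ∑ b : Fin 2, (Gn n).dist (i, a) (j, b) =
      2 * (i - j).valMinAbs.natAbs + if i = j then 1 else 0 := by
  rw [Fin.sum_univ_two, dist_eq, dist_eq]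
  by_cases hij : i = j
  · subst hij
    fin_cases a <;> simp
  · have hpos : (i - j).valMinAbs.natAbs ≠ 0 := by simpa [sub_eq_zero] using hij
    simp only [Prod.mk.injEq, hij, false_and, if_false]
    omega

variable [NeZero n]

lemma sum_dist (x : ZMod n × Fin 2) :
    ∑ y, (Gn n).dist x y = 2 * ∑ t : ZMod n, t.valMinAbs.natAbs + 1 := by
  rw [Fintype.sum_prod_type]
  simp_rw [sum_dist_fin_two, sum_add_distrib, ← mul_sum, sum_ite_eq, if_pos (mem_univ _)]
  exact congrArg (2 * · + 1) ((Equiv.subLeft x.1).sum_comp fun t => t.valMinAbs.natAbs)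

end Gn

theorem wienerIndex_Gn_odd_general (n : ℕ) [NeZero n] (hodd : Odd n) :
    wienerIndex (Gn n) = (n ^ 3 + n) / 2 := by
  obtain ⟨m, rfl⟩ := hodd
  have hrow (x : ZMod (2 * m + 1) × Fin 2) :
      ∑ y, (Gn (2 * m + 1)).dist x y = 2 * (m * (m + 1)) + 1 := by
    rw [Gn.sum_dist, ZMod.sum_natAbs_valMinAbs_odd]
  rw [wienerIndex, sum_congr rfl fun x _ => hrow x, sum_const, card_univ, Fintype.card_prod,
    ZMod.card, Fintype.card_fin, smul_eq_mul]
  congr 1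
  ring

/-- For every odd integer `n ≥ 3`, the Wiener index of `G_n = P₂ ⊠ C_n`
equals `(n³ + n)/2`. -/
theorem wienerIndex_Gn_odd (n : ℕ) [NeZero n] (hn : 3 ≤ n) (hodd : Odd n) :
    wienerIndex (Gn n) = (n ^ 3 + n) / 2 :=
  wienerIndex_Gn_odd_general n hodd
end

section
/- Let n ≥ 3 and let S be any set of r vertical edges of G_n, where 0 ≤ r ≤ n, and let G_n^r be the graph obtained from G_n by deleting the edges in S. Then the characteristic polynomial of the Laplacian matrix of G_n^r over ℝ factors as char(L(G_n^r)) = (X − 4)^r · (X − 6)^{n−r} · ∏_{i=0}^{n−1} (X − 8·sin²(iπ/n)). In particular the Laplacian eigenvalues of G_n^r are 0, 8·sin²(iπ/n) for i = 1, …, n−1, 4 with multiplicity r, and 6 with multiplicity n−r, independently of the choice of S. -/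
/-!
Listing the vertices as two copies `(·, 0)` and `(·, 1)` of `ZMod n`, the Laplacian of `G_n^r`
has the block form `[[A, B], [B, A]]`, so its characteristic polynomial is `χ(A + B) · χ(A - B)`.
The horizontal and diagonal edges make `A + B = 4 - 2 · adj(C_n)`, a circulant matrix; the
characters of `ZMod n` diagonalise it, with eigenvalues `4 - 4 cos (2πk/n) = 8 sin² (πk/n)`.
The vertical edges only enter `A - B`, which is diagonal with entry `4` at the `r` positions
whose vertical edge was deleted and `6` elsewhere.
-/

open Polynomial

/-- Deleting a set of edges from `G_n` keeps adjacency decidable (classically). -/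
noncomputable instance (n : ℕ) (s : Set (Sym2 (ZMod n × Fin 2))) :
    DecidableRel ((Gn n).deleteEdges s).Adj :=
  Classical.decRel _

theorem Finset.prod_ite_mem_univ {ι M : Type*} [Fintype ι] [DecidableEq ι] [CommMonoid M]
    (D : Finset ι) (a b : M) :
    ∏ i, (if i ∈ D then a else b) = a ^ D.card * b ^ (Fintype.card ι - D.card) := by
  rw [prod_ite, prod_const, prod_const, filter_mem_eq_inter, univ_inter, filter_not,
    filter_mem_eq_inter, univ_inter, ← compl_eq_univ_sdiff, card_compl]

theorem ZMod.prod_val_eq_prod_range {n : ℕ} [NeZero n] {M : Type*} [CommMonoid M] (f : ℕ → M) :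
    ∏ k : ZMod n, f k.val = ∏ i ∈ Finset.range n, f i := by
  obtain ⟨m, rfl⟩ := Nat.exists_eq_succ_of_ne_zero (NeZero.ne n)
  exact Fin.prod_univ_eq_prod_range f (m + 1)

namespace Matrix

section

variable {ι R : Type*} [Fintype ι] [DecidableEq ι] [CommRing R]

theorem charpoly_diagonal_ite_mem (D : Finset ι) (a b : R) :
    (diagonal fun i => if i ∈ D then a else b).charpoly =
      (X - C a) ^ D.card * (X - C b) ^ (Fintype.card ι - D.card) := by
  rw [charpoly_diagonal, ← Finset.prod_ite_mem_univ]
  exact Finset.prod_congr rfl fun i _ => by split_ifs <;> rfl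

theorem det_fromBlocks_self_swap (A B : Matrix ι ι R) :
    (fromBlocks A B B A).det = (A + B).det * (A - B).det := by
  have h : fromBlocks A B B A =
      fromBlocks 1 0 1 1 * fromBlocks (A + B) B 0 (A - B) * fromBlocks 1 0 (-1) 1 := by
    simp only [fromBlocks_multiply, Matrix.one_mul, Matrix.mul_one, Matrix.zero_mul,
      Matrix.mul_zero, Matrix.mul_neg, add_zero, zero_add]
    congr 1 <;> abel
  rw [h, det_mul, det_mul, det_fromBlocks_zero₁₂, det_fromBlocks_zero₁₂, det_fromBlocks_zero₂₁]
  simp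

theorem charpoly_fromBlocks_self_swap (A B : Matrix ι ι R) :
    (fromBlocks A B B A).charpoly = (A + B).charpoly * (A - B).charpoly := by
  rw [charpoly, charmatrix_fromBlocks, det_fromBlocks_self_swap, charpoly, charpoly]
  congr 2 <;> simp only [charmatrix, map_add, map_sub, RingHom.mapMatrix_apply] <;> abel

theorem charpoly_of_apply_fin_two (M : Matrix (ι × Fin 2) (ι × Fin 2) R) (A B : Matrix ι ι R)
    (h : ∀ i b j c, M (i, b) (j, c) = if b = c then A i j else B i j) :
    M.charpoly = (A + B).charpoly * (A - B).charpoly := by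
  let e : ι × Fin 2 ≃ ι ⊕ ι :=
    (Equiv.prodComm ι (Fin 2)).trans <|
      (finTwoEquiv.prodCongr (Equiv.refl ι)).trans (Equiv.boolProdEquivSum ι)
  have hM : reindex e e M = fromBlocks A B B A := by
    ext (i | i) (j | j) <;> simp [e, h, finTwoEquiv]
  rw [← charpoly_reindex e, hM, charpoly_fromBlocks_self_swap]

end

section Circulant

variable {n : ℕ} [NeZero n]

theorem sum_circulant_apply {α : Type*} [AddCommMonoid α] (v : ZMod n → α) (i : ZMod n) :
    ∑ j, circulant v i j = ∑ k, v k :=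
  Fintype.sum_equiv (Equiv.subLeft i) _ _ fun j => by simp

variable (n) in
noncomputable def dftMatrix : Matrix (ZMod n) (ZMod n) ℂ :=
  of fun j k => ZMod.stdAddChar (j * k)

theorem circulant_mul_dftMatrix (v : ZMod n → ℂ) :
    circulant v * dftMatrix n = dftMatrix n * diagonal (ZMod.dft v) := by
  ext i k
  rw [mul_diagonal, mul_apply, ZMod.dft_apply, Finset.mul_sum]
  refine Fintype.sum_equiv (Equiv.subLeft i) _ _ fun j => ?_
  simp only [circulant_apply, dftMatrix, of_apply, Equiv.subLeft_apply, smul_eq_mul]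
  rw [show j * k = i * k + -((i - j) * k) by ring, AddChar.map_add_eq_mul]
  ring

theorem submatrix_neg_dftMatrix_mul_dftMatrix :
    (dftMatrix n).submatrix Neg.neg id * dftMatrix n = (n : ℂ) • 1 := by
  ext j l
  have hterm (k : ZMod n) : ZMod.stdAddChar (-j * k) * ZMod.stdAddChar (k * l) =
      ZMod.stdAddChar (k * (l - j)) := by
    rw [← AddChar.map_add_eq_mul]; ring_nf
  simp only [mul_apply, submatrix_apply, dftMatrix, of_apply, id, hterm,
    AddChar.sum_mulShift _ (ZMod.isPrimitive_stdAddChar n), sub_eq_zero, ZMod.card, smul_apply,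
    one_apply, eq_comm (a := l)]
  split_ifs <;> simp

theorem charpoly_circulant (v : ZMod n → ℂ) :
    (circulant v).charpoly = ∏ k, (X - C (ZMod.dft v k)) := by
  set G := (n : ℂ)⁻¹ • (dftMatrix n).submatrix Neg.neg id
  have hGF : G * dftMatrix n = 1 := by
    rw [smul_mul, submatrix_neg_dftMatrix_mul_dftMatrix, smul_smul,
      inv_mul_cancel₀ (Nat.cast_ne_zero.mpr (NeZero.ne n)), one_smul]
  calc (circulant v).charpoly = (dftMatrix n * (diagonal (ZMod.dft v) * G)).charpoly := by
        rw [← Matrix.mul_assoc, ← circulant_mul_dftMatrix, Matrix.mul_assoc,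
          mul_eq_one_comm.mp hGF, Matrix.mul_one]
    _ = (diagonal (ZMod.dft v)).charpoly := by
        rw [charpoly_mul_comm, Matrix.mul_assoc, hGF, Matrix.mul_one]
    _ = _ := charpoly_diagonal _

end Circulant

end Matrix

open Matrix

section Cycle

variable {n : ℕ}

variable (n) in
def cycleAdjVec (R : Type*) [AddMonoidWithOne R] : ZMod n → R :=
  Pi.single 1 1 + Pi.single (-1) 1

variable (n) in
def cycleLapVec (R : Type*) [Ring R] : ZMod n → R :=
  4 • Pi.single 0 1 - 2 • cycleAdjVec n R

theorem sum_cycleAdjVec [NeZero n] (R : Type*) [AddCommMonoidWithOne R] :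
    ∑ k, cycleAdjVec n R k = 2 := by
  simp [cycleAdjVec, Finset.sum_add_distrib, one_add_one_eq_two]

theorem map_cycleLapVec {R S : Type*} [Ring R] [Ring S] (f : R →+* S) :
    (fun k => f (cycleLapVec n R k)) = cycleLapVec n S := by
  ext k
  simp only [cycleLapVec, cycleAdjVec, Pi.sub_apply, Pi.smul_apply, Pi.add_apply, Pi.single_apply]
  split_ifs <;> simp [map_ofNat]

variable [NeZero n]

theorem ZMod.dft_single_one (a k : ZMod n) :
    ZMod.dft (Pi.single a 1 : ZMod n → ℂ) k = ZMod.stdAddChar (-(a * k)) := by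
  simp [ZMod.dft_apply, Pi.single_apply]

theorem ZMod.stdAddChar_add_stdAddChar_neg (k : ZMod n) :
    ZMod.stdAddChar k + ZMod.stdAddChar (-k) = 2 * Complex.cos (2 * Real.pi * k.val / n) := by
  rw [AddChar.map_neg_eq_inv, ZMod.stdAddChar_apply, ZMod.toCircle_apply, ← Complex.exp_neg,
    Complex.cos]
  ring_nf

theorem dft_cycleLapVec (k : ZMod n) :
    ZMod.dft (cycleLapVec n ℂ) k = 8 * Complex.sin (k.val * Real.pi / n) ^ 2 := by
  simp only [cycleLapVec, cycleAdjVec, map_sub, map_nsmul, map_add, Pi.sub_apply, Pi.smul_apply,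
    Pi.add_apply, ZMod.dft_single_one, zero_mul, neg_zero, AddChar.map_zero_eq_one, one_mul,
    neg_mul, neg_neg]
  rw [add_comm, ZMod.stdAddChar_add_stdAddChar_neg,
    show (2 * Real.pi * k.val / n : ℂ) = 2 * (k.val * Real.pi / n) by ring, Complex.cos_two_mul,
    Complex.cos_sq']
  simp only [nsmul_eq_mul]
  ring

theorem charpoly_circulant_cycleLapVec :
    (circulant (cycleLapVec n ℝ)).charpoly =
      ∏ i ∈ Finset.range n, (X - C (8 * Real.sin (i * Real.pi / n) ^ 2)) := by
  apply Polynomial.map_injective _ (algebraMap ℝ ℂ).injective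
  rw [← charpoly_map, map_circulant, map_cycleLapVec, charpoly_circulant, Polynomial.map_prod,
    ← ZMod.prod_val_eq_prod_range]
  refine Finset.prod_congr rfl fun k _ => ?_
  rw [dft_cycleLapVec]
  simp [-ZMod.natCast_val]

end Cycle

theorem SimpleGraph.charpoly_lapMatrix_of_adjMatrix_apply {ι R : Type*} [Fintype ι]
    [DecidableEq ι] [CommRing R] (G : SimpleGraph (ι × Fin 2)) [DecidableRel G.Adj]
    (A B : Matrix ι ι R)
    (h : ∀ i b j c, G.adjMatrix R (i, b) (j, c) = if b = c then A i j else B i j) :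
    (G.lapMatrix R).charpoly =
      (diagonal (fun i => ∑ j, (A i j + B i j)) - (A + B)).charpoly *
        (diagonal (fun i => ∑ j, (A i j + B i j)) - (A - B)).charpoly := by
  set d := fun i => ∑ j, (A i j + B i j)
  have hdeg (i : ι) (b : Fin 2) : (G.degree (i, b) : R) = d i := by
    rw [G.degree_eq_sum_if_adj, Fintype.sum_prod_type]
    simp only [← adjMatrix_apply, h, Fin.sum_univ_two]
    fin_cases b <;> simp [d, add_comm]
  rw [charpoly_of_apply_fin_two _ (diagonal d - A) (-B)]
  · congr 2 <;> abel
  · intro i b j c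
    rw [lapMatrix, degMatrix, Matrix.sub_apply, h, diagonal_apply, hdeg]
    split_ifs <;> simp_all

section Graph

variable {n : ℕ}

def verticalEdge (i : ZMod n) : Sym2 (ZMod n × Fin 2) := s((i, 0), (i, 1))

theorem verticalEdge_injective : Function.Injective (verticalEdge (n := n)) := by
  intro i j h
  simpa [verticalEdge] using h

theorem mk_mem_image_verticalEdge_iff {D : Finset (ZMod n)} {j l : ZMod n} {b c : Fin 2} :
    s((j, b), (l, c)) ∈ D.image verticalEdge ↔ j = l ∧ b ≠ c ∧ j ∈ D := by
  fin_cases b <;> fin_cases c <;> simp [verticalEdge] <;> grind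

theorem Gn_deleteEdges_image_verticalEdge_adj [Nontrivial (ZMod n)] (D : Finset (ZMod n))
    (j : ZMod n) (b : Fin 2) (l : ZMod n) (c : Fin 2) :
    ((Gn n).deleteEdges ↑(D.image verticalEdge)).Adj (j, b) (l, c) ↔
      (j = l ∧ b ≠ c ∧ j ∉ D) ∨ j - l = 1 ∨ j - l = -1 := by
  rw [SimpleGraph.deleteEdges_adj, Finset.mem_coe, mk_mem_image_verticalEdge_iff]
  have : (1 : ZMod n) ≠ 0 := one_ne_zero
  simp only [Gn, ne_eq, Prod.mk.injEq]
  grind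

theorem adjMatrix_Gn_deleteEdges_image_verticalEdge_apply [Fact (2 < n)] (R : Type*) [Ring R]
    (D : Finset (ZMod n)) (j : ZMod n) (b : Fin 2) (l : ZMod n) (c : Fin 2) :
    ((Gn n).deleteEdges ↑(D.image verticalEdge)).adjMatrix R (j, b) (l, c) =
      if b = c then circulant (cycleAdjVec n R) j l
      else circulant (cycleAdjVec n R) j l + diagonal (fun i => if i ∈ D then 0 else 1) j l := by
  have : Nontrivial (ZMod n) := ZMod.nontrivial_iff.mpr (by have := (Fact.out : 2 < n); omega)
  have : (-1 : ZMod n) ≠ 1 := ZMod.neg_one_ne_one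
  have : (1 : ZMod n) ≠ 0 := one_ne_zero
  have : j = l ↔ j - l = 0 := sub_eq_zero.symm
  simp only [SimpleGraph.adjMatrix_apply, Gn_deleteEdges_image_verticalEdge_adj, circulant_apply,
    cycleAdjVec, Pi.add_apply, Pi.single_apply, diagonal_apply]
  split_ifs <;> grind

theorem charpoly_lapMatrix_Gn_deleteEdges_image_verticalEdge [NeZero n] [Fact (2 < n)]
    (R : Type*) [CommRing R] (D : Finset (ZMod n)) :
    (((Gn n).deleteEdges ↑(D.image verticalEdge)).lapMatrix R).charpoly =
      (circulant (cycleLapVec n R)).charpoly *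
        (diagonal fun i => if i ∈ D then 4 else 6).charpoly := by
  set A := circulant (cycleAdjVec n R)
  set E : Matrix (ZMod n) (ZMod n) R := diagonal (fun i => if i ∈ D then 0 else 1)
  rw [SimpleGraph.charpoly_lapMatrix_of_adjMatrix_apply _ A (A + E)
    (adjMatrix_Gn_deleteEdges_image_verticalEdge_apply R D)]
  have hdeg : diagonal (fun i => ∑ j, (A i j + (A + E) i j)) = 4 • 1 + E := by
    ext i j
    simp only [Matrix.add_apply, Finset.sum_add_distrib, A, sum_circulant_apply, sum_cycleAdjVec]
    simp only [E, diagonal_apply, Matrix.smul_apply, one_apply]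
    split_ifs <;> norm_num
  rw [hdeg]
  congr 2
  · simp only [cycleLapVec, circulant_sub, circulant_smul, circulant_single_one]
    abel
  · rw [show 4 • 1 + E - (A - (A + E)) = 4 • 1 + E + E by abel]
    ext i j
    simp only [E, Matrix.add_apply, Matrix.smul_apply, diagonal_apply, one_apply]
    split_ifs <;> norm_num

end Graph

theorem charpoly_lapMatrix_Gn_deleteVerticalEdges_general (n r : ℕ) [NeZero n] (hn : 3 ≤ n)
    (S : Finset (Sym2 (ZMod n × Fin 2)))
    (hS : ∀ e ∈ S, ∃ i : ZMod n, e = s(((i, 0) : ZMod n × Fin 2), (i, 1)))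
    (hcard : S.card = r) :
    (((Gn n).deleteEdges ↑S).lapMatrix ℝ).charpoly =
      (X - C (4 : ℝ)) ^ r * (X - C (6 : ℝ)) ^ (n - r) *
        ∏ i ∈ Finset.range n, (X - C (8 * Real.sin (i * Real.pi / n) ^ 2)) := by
  have : Fact (2 < n) := ⟨hn⟩
  obtain ⟨D, rfl⟩ : ∃ D : Finset (ZMod n), D.image verticalEdge = S :=
    Finset.subset_univ_image_iff.mp fun e he => by obtain ⟨i, rfl⟩ := hS e he; simp [verticalEdge]
  rw [Finset.card_image_of_injective _ verticalEdge_injective] at hcard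
  rw [charpoly_lapMatrix_Gn_deleteEdges_image_verticalEdge, charpoly_circulant_cycleLapVec,
    charpoly_diagonal_ite_mem, ZMod.card, hcard, mul_comm]

/-- Let `n ≥ 3` and let `S` be any set of `r` vertical edges of
`G_n = P₂ ⊠ C_n` (the vertical edges being the edges joining `(i,0)` and `(i,1)`), where
`0 ≤ r ≤ n`. Then the characteristic polynomial of the Laplacian matrix of the graph `G_n^r`
obtained from `G_n` by deleting the edges of `S` factors over `ℝ` as
`(X − 4)^r · (X − 6)^(n−r) · ∏_{i=0}^{n−1} (X − 8·sin²(iπ/n))`, independently of `S`. -/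
theorem charpoly_lapMatrix_Gn_deleteVerticalEdges (n r : ℕ) [NeZero n] (hn : 3 ≤ n)
    (hr : r ≤ n) (S : Finset (Sym2 (ZMod n × Fin 2)))
    (hS : ∀ e ∈ S, ∃ i : ZMod n, e = s(((i, 0) : ZMod n × Fin 2), (i, 1)))
    (hcard : S.card = r) :
    (((Gn n).deleteEdges ↑S).lapMatrix ℝ).charpoly =
      (X - C (4 : ℝ)) ^ r * (X - C (6 : ℝ)) ^ (n - r) *
        ∏ i ∈ Finset.range n, (X - C (8 * Real.sin (i * Real.pi / n) ^ 2)) :=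
  charpoly_lapMatrix_Gn_deleteVerticalEdges_general n r hn S hS hcard
end
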